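/- The operators B_1,…,B_{n−1}, where B_i := −(∂_i∘X_{i+1} − q·X_{i+1}∘∂_i), satisfy the Hecke algebra relations: B_i∘B_{i+1}∘B_i = B_{i+1}∘B_i∘B_{i+1} for all 1 ≤ i ≤ n−2; B_i∘B_j = B_j∘B_i whenever |i−j| > 1; and B_i∘B_i = (1−q)·B_i + q·id for all 1 ≤ i ≤ n−1. -/

import Mathlib

open MvPolynomial

noncomputable section

/-- The ground field `F = ℚ(q)`, rational functions over `ℚ`. -/
abbrev F : Type := RatFunc ℚ

/-- The indeterminate `q`. -/
def q : F := RatFunc.X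

/-- The polynomial ring `P_n = F[x_1, …, x_n]` (variables indexed `0, …, n-1`). -/
abbrev Pn (n : ℕ) : Type := MvPolynomial (Fin n) F

/-- The adjacent transposition `s_i` swapping positions `i` and `i+1` (0-indexed). -/
def transp (n i : ℕ) (h : i + 1 < n) : Equiv.Perm (Fin n) :=
  Equiv.swap ⟨i, by omega⟩ ⟨i + 1, h⟩

/-- Multiplication by the variable `x_j`. -/
def Xop {n : ℕ} (j : Fin n) : Pn n →ₗ[F] Pn n := LinearMap.mulLeft F (X j)

/-- A family of candidate divided-difference operators. -/
abbrev DDFam (n : ℕ) := ∀ i : ℕ, i + 1 < n → (Pn n →ₗ[F] Pn n)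

/-- `dd` is the family of divided difference operators:
`(x_i - x_{i+1}) · ∂_i f = f - s_i f`.  This determines `dd` uniquely. -/
def IsDD {n : ℕ} (dd : DDFam n) : Prop :=
  ∀ (i : ℕ) (h : i + 1 < n) (f : Pn n),
    (X (⟨i, by omega⟩ : Fin n) - X ⟨i + 1, h⟩) * dd i h f
      = f - rename (⇑(transp n i h)) f

/-- The q-commutator operator `A_i = ∂_i ∘ X_i - q · X_i ∘ ∂_i`. -/
def Aop {n : ℕ} (dd : DDFam n) (i : ℕ) (h : i + 1 < n) : Pn n →ₗ[F] Pn n :=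
  dd i h ∘ₗ Xop ⟨i, by omega⟩ - q • (Xop (⟨i, by omega⟩ : Fin n) ∘ₗ dd i h)

/-- The operator `B_i = -(∂_i ∘ X_{i+1} - q · X_{i+1} ∘ ∂_i)`. -/
def Bop {n : ℕ} (dd : DDFam n) (i : ℕ) (h : i + 1 < n) : Pn n →ₗ[F] Pn n :=
  -(dd i h ∘ₗ Xop ⟨i + 1, h⟩ - q • (Xop (⟨i + 1, h⟩ : Fin n) ∘ₗ dd i h))

/-- Swap the exponents of `x_i` and `x_{i+1}` in a monomial exponent vector. -/
def swapIdx (n i : ℕ) (h : i + 1 < n) (d : Fin n →₀ ℕ) : Fin n →₀ ℕ :=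
  Finsupp.equivMapDomain (transp n i h) d

/-- Value of `R_i` on the monomial with exponent vector `d`. -/
def Rval {n : ℕ} (i : ℕ) (h : i + 1 < n) (d : Fin n →₀ ℕ) : Pn n :=
  if d ⟨i + 1, h⟩ < d ⟨i, by omega⟩ then q • monomial (swapIdx n i h d) (1 : F)
  else if d ⟨i, by omega⟩ < d ⟨i + 1, h⟩ then
    (1 - q) • monomial d (1 : F) + monomial (swapIdx n i h d) (1 : F)
  else monomial d (1 : F)

/-- The operator `R_i`, the linear extension of `Rval` from monomials. -/
def Rop {n : ℕ} (i : ℕ) (h : i + 1 < n) : Pn n →ₗ[F] Pn n :=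
  (basisMonomials (Fin n) F).constr F (Rval i h)

/-- Value of `R*_i` on the monomial with exponent vector `d`. -/
def Rstarval {n : ℕ} (i : ℕ) (h : i + 1 < n) (d : Fin n →₀ ℕ) : Pn n :=
  if d ⟨i + 1, h⟩ ≤ d ⟨i, by omega⟩ then monomial (swapIdx n i h d) (1 : F)
  else (1 - q) • monomial d (1 : F) + q • monomial (swapIdx n i h d) (1 : F)

/-- The operator `R*_i`, the linear extension of `Rstarval` from monomials. -/
def Rstarop {n : ℕ} (i : ℕ) (h : i + 1 < n) : Pn n →ₗ[F] Pn n :=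
  (basisMonomials (Fin n) F).constr F (Rstarval i h)

/-- `f` is a symmetric polynomial. -/
def symmP {n : ℕ} (f : Pn n) : Prop :=
  ∀ σ : Equiv.Perm (Fin n), rename (⇑σ) f = f

/-- The ideal `I_n` generated by symmetric polynomials with zero constant term. -/
def In (n : ℕ) : Ideal (Pn n) :=
  Ideal.span {f : Pn n | symmP f ∧ constantCoeff f = 0}

/-- The quotient map `P_n → P_n / I_n` as an `F`-linear map. -/
def mkI (n : ℕ) : Pn n →ₗ[F] (Pn n ⧸ In n) :=
  (Ideal.Quotient.mkₐ F (In n)).toLinearMap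

/-- `R^k`: the image in `P_n/I_n` of the homogeneous polynomials of degree `k`. -/
def RkSub (n k : ℕ) : Submodule F (Pn n ⧸ In n) :=
  Submodule.map (mkI n) (homogeneousSubmodule (Fin n) F k)

/-- The Coxeter length of a permutation: its number of inversions. -/
def len {n : ℕ} (w : Equiv.Perm (Fin n)) : ℕ :=
  (Finset.univ.filter (fun p : Fin n × Fin n => p.1 < p.2 ∧ w p.2 < w p.1)).card

/-- The staircase monomial `x_1^{n-1} x_2^{n-2} ⋯ x_{n-1}`. -/
def staircase (n : ℕ) : Pn n := ∏ j : Fin n, (X j : Pn n) ^ (n - 1 - (j : ℕ))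

/-- `S` is the family of Schubert polynomials: `S w₀` is the staircase monomial, and
`∂_i 𝔖_w = 𝔖_{w s_i}` whenever `ℓ(w s_i) < ℓ(w)`.  This determines `S` uniquely. -/
def IsSchubert {n : ℕ} (dd : DDFam n) (S : Equiv.Perm (Fin n) → Pn n) : Prop :=
  S (Fin.revPerm) = staircase n ∧
  ∀ (w : Equiv.Perm (Fin n)) (i : ℕ) (h : i + 1 < n),
    len (w * transp n i h) < len w → dd i h (S w) = S (w * transp n i h)

/-- The 3-cycle `(a, b, c)`, sending `a ↦ b`, `b ↦ c`, `c ↦ a`. -/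
def cyc3 {n : ℕ} (a b c : Fin n) : Equiv.Perm (Fin n) :=
  Equiv.swap a c * Equiv.swap a b

/-- The Hecke algebra relations for a family of operators. -/
def HeckeRels {n : ℕ} (T : ∀ i : ℕ, i + 1 < n → (Pn n →ₗ[F] Pn n)) : Prop :=
  (∀ (i : ℕ) (h : i + 2 < n),
      T i (by omega) ∘ₗ (T (i + 1) (by omega) ∘ₗ T i (by omega))
        = T (i + 1) (by omega) ∘ₗ (T i (by omega) ∘ₗ T (i + 1) (by omega))) ∧
  (∀ (i j : ℕ) (hi : i + 1 < n) (hj : j + 1 < n), (i + 1 < j ∨ j + 1 < i) →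
      T i hi ∘ₗ T j hj = T j hj ∘ₗ T i hi) ∧
  (∀ (i : ℕ) (h : i + 1 < n),
      T i h ∘ₗ T i h = (1 - q) • T i h + q • LinearMap.id)

/-- Composition `T_{j₁} ∘ T_{j₂} ∘ ⋯ ∘ T_{j_k}` along a list of indices. -/
def compFam {n : ℕ} (T : ℕ → (Pn n →ₗ[F] Pn n)) : List ℕ → (Pn n →ₗ[F] Pn n)
  | [] => LinearMap.id
  | j :: l => T j ∘ₗ compFam T l

/-- Totalized version of `Aop` (identity outside the allowed index range). -/
def Atot {n : ℕ} (dd : DDFam n) (j : ℕ) : Pn n →ₗ[F] Pn n :=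
  if h : j + 1 < n then Aop dd j h else LinearMap.id

/-- Totalized version of `Rop` (identity outside the allowed index range). -/
def Rtot (n : ℕ) (j : ℕ) : Pn n →ₗ[F] Pn n :=
  if h : j + 1 < n then Rop j h else LinearMap.id

/-- The (0-indexed) index set `J_μ`: all `j ∈ {0, …, n-2}` such that `j+1` is not a
partial sum `μ_1 + ⋯ + μ_k` of the partition. -/
def Jlist (n : ℕ) (μ : List ℕ) : List ℕ :=
  (List.range (n - 1)).filter
    (fun j => (List.range (μ.length + 1)).all (fun k => (μ.take k).sum != j + 1))

/-- The value `w(a)` of a permutation, as a function on naturals. -/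
def permVal {n : ℕ} (w : Equiv.Perm (Fin n)) (a : ℕ) : ℕ :=
  if h : a < n then ((w ⟨a, h⟩ : Fin n) : ℕ) else a

open scoped Classical in
/-- The factor `m_q` attached to the block of positions `p, p+1, …, p+m-1`:
`(-q)^j` if, within the block, `w` has descents exactly at the first `j` places
(i.e. `w` decreases on the first `j+1` entries and then increases), and `0` otherwise. -/
def blockWeight {n : ℕ} (w : Equiv.Perm (Fin n)) (p m : ℕ) : F :=
  if h : ∃ j, j < m ∧ ∀ a : ℕ, p ≤ a → a + 1 < p + m →
      (permVal w (a + 1) < permVal w a ↔ a < p + j)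
  then (-q) ^ h.choose else 0

/-- `weight_q^μ(w) = ∏ m_q(w_i)`, the product of the block factors over the blocks of `μ`. -/
def weightq {n : ℕ} (μ : List ℕ) (w : Equiv.Perm (Fin n)) : F :=
  ∏ t ∈ Finset.range μ.length, blockWeight w ((μ.take t).sum) (μ.getD t 0)

/-- `μ` is a partition of `n`. -/
def IsPartition (n : ℕ) (μ : List ℕ) : Prop :=
  List.Pairwise (· ≥ ·) μ ∧ (∀ x ∈ μ, 0 < x) ∧ μ.sum = n

/-- The operator `D_i f = c_i · f + P_i(x_i, x_{i+1}) · ∂_i f`. -/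
def Dop {n : ℕ} (dd : DDFam n) (c : ℕ → F) (Pp : ℕ → MvPolynomial (Fin 2) F)
    (i : ℕ) (h : i + 1 < n) : Pn n →ₗ[F] Pn n :=
  c i • LinearMap.id +
    LinearMap.mulLeft F (aeval ![(X ⟨i, by omega⟩ : Pn n), X ⟨i + 1, h⟩] (Pp i)) ∘ₗ dd i h

/-- `f` has integer coefficients. -/
def IsIntPoly {n : ℕ} (f : Pn n) : Prop :=
  ∀ d : Fin n →₀ ℕ, ∃ z : ℤ, coeff d f = (z : F)

/-! Over the fraction field `K` of `P_n` the defining relation of `∂_i` reads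
`∂_i f = (f - s_i f) / (x_i - x_{i+1})`, so `B_i` becomes the Demazure–Lusztig operator
`f ↦ f - (x_i - q x_{i+1}) (f - s_i f) / (x_i - x_{i+1})`, with `s_i` extended to a field
automorphism of `K`. For such operators the Hecke relations only need that the `s_i` are
involutions satisfying the Coxeter relations of `S_n` and permute the relevant variables; after
pushing the automorphisms through, each relation is an identity of rational functions in the
variables, `q` and the images of `f` under `⟨s_i, s_{i+1}⟩`. They descend to `P_n` because
`P_n → K` is injective. -/

section DemazureLusztig

variable {K : Type*} [Field K]

def demazureLusztig (σ : K →+* K) (t a b x : K) : K :=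
  x - (a - t * b) * (x - σ x) / (a - b)

variable {σ τ : K →+* K} {t a b c d : K}

theorem demazureLusztig_sq (hσ : ∀ x, σ (σ x) = x) (ha : σ a = b) (ht : σ t = t)
    (hab : a ≠ b) (x : K) :
    demazureLusztig σ t a b (demazureLusztig σ t a b x)
      = (1 - t) * demazureLusztig σ t a b x + t * x := by
  have hb : σ b = a := ha ▸ hσ a
  have hab' : a - b ≠ 0 := sub_ne_zero.mpr hab
  simp only [demazureLusztig, map_sub, map_mul, map_div₀, hσ, ha, hb, ht]
  field_simp
  ring

theorem demazureLusztig_comm (hστ : ∀ x, σ (τ x) = τ (σ x)) (hσc : σ c = c) (hσd : σ d = d)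
    (hτa : τ a = a) (hτb : τ b = b) (hσt : σ t = t) (hτt : τ t = t) (x : K) :
    demazureLusztig σ t a b (demazureLusztig τ t c d x)
      = demazureLusztig τ t c d (demazureLusztig σ t a b x) := by
  simp only [demazureLusztig, map_sub, map_mul, map_div₀, hστ, hσc, hσd, hτa, hτb, hσt,
    hτt]
  ring

theorem demazureLusztig_braid (hσ : ∀ x, σ (σ x) = x) (hτ : ∀ x, τ (τ x) = x)
    (hστσ : ∀ x, σ (τ (σ x)) = τ (σ (τ x)))
    (hσa : σ a = b) (hσc : σ c = c) (hτb : τ b = c) (hτa : τ a = a)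
    (hσt : σ t = t) (hτt : τ t = t) (hab : a ≠ b) (hbc : b ≠ c) (hac : a ≠ c) (x : K) :
    demazureLusztig σ t a b (demazureLusztig τ t b c (demazureLusztig σ t a b x))
      = demazureLusztig τ t b c (demazureLusztig σ t a b (demazureLusztig τ t b c x)) := by
  have hσb : σ b = a := hσa ▸ hσ a
  have hτc : τ c = b := hτb ▸ hτ b
  have hab' : a - b ≠ 0 := sub_ne_zero.mpr hab
  have hbc' : b - c ≠ 0 := sub_ne_zero.mpr hbc
  have hac' : a - c ≠ 0 := sub_ne_zero.mpr hac
  simp only [demazureLusztig, map_sub, map_mul, map_div₀, hσ, hτ, hστσ, hσa, hσb, hσc, hτa,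
    hτb, hτc, hσt, hτt]
  field_simp
  ring

end DemazureLusztig

section Transpositions

variable {n : ℕ}

theorem transp_apply_left (i : ℕ) (h : i + 1 < n) :
    transp n i h ⟨i, by omega⟩ = ⟨i + 1, h⟩ := Equiv.swap_apply_left _ _

theorem transp_apply_right (i : ℕ) (h : i + 1 < n) :
    transp n i h ⟨i + 1, h⟩ = ⟨i, by omega⟩ := Equiv.swap_apply_right _ _

theorem transp_apply_of_ne (i : ℕ) (h : i + 1 < n) {j : ℕ} (hj : j < n) (hji : j ≠ i)
    (hji' : j ≠ i + 1) : transp n i h ⟨j, hj⟩ = ⟨j, hj⟩ :=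
  Equiv.swap_apply_of_ne_of_ne (by simpa using hji) (by simpa using hji')

theorem transp_mul_self (i : ℕ) (h : i + 1 < n) : transp n i h * transp n i h = 1 :=
  Equiv.swap_mul_self _ _

theorem transp_braid (i : ℕ) (h : i + 2 < n) :
    transp n i (by omega) * transp n (i + 1) h * transp n i (by omega)
      = transp n (i + 1) h * transp n i (by omega) * transp n (i + 1) h := by
  ext x
  simp only [transp, Equiv.Perm.mul_apply, Equiv.swap_apply_def]
  split_ifs <;> simp only [Fin.ext_iff, not_true_eq_false] at * <;> omega

theorem transp_commute (i j : ℕ) (hi : i + 1 < n) (hj : j + 1 < n)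
    (hij : i + 1 < j ∨ j + 1 < i) :
    transp n i hi * transp n j hj = transp n j hj * transp n i hi := by
  ext x
  simp only [transp, Equiv.Perm.mul_apply, Equiv.swap_apply_def]
  split_ifs <;> simp only [Fin.ext_iff] at * <;> omega

end Transpositions

section FractionField

variable {n : ℕ} {dd : DDFam n}

local notation "K" n => FractionRing (Pn n)

local notation "ι" => algebraMap (Pn n) (K n)

def renameFrac (w : Equiv.Perm (Fin n)) : (K n) →+* (K n) :=
  (IsFractionRing.ringEquivOfRingEquiv (renameEquiv F w).toRingEquiv).toRingHom

theorem renameFrac_algebraMap (w : Equiv.Perm (Fin n)) (p : Pn n) :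
    renameFrac w (ι p) = ι (rename w p) :=
  IsFractionRing.ringEquivOfRingEquiv_algebraMap _ p

theorem renameFrac_renameFrac (v w : Equiv.Perm (Fin n)) (x : K n) :
    renameFrac v (renameFrac w x) = renameFrac (v * w) x := by
  suffices (renameFrac v).comp (renameFrac w) = renameFrac (v * w) from
    RingHom.congr_fun this x
  refine IsLocalization.ringHom_ext (nonZeroDivisors (Pn n)) (RingHom.ext fun p => ?_)
  simp [renameFrac_algebraMap, rename_rename]

theorem renameFrac_one (x : K n) : renameFrac 1 x = x := by
  suffices renameFrac 1 = RingHom.id (K n) from RingHom.congr_fun this x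
  refine IsLocalization.ringHom_ext (nonZeroDivisors (Pn n)) (RingHom.ext fun p => ?_)
  simp [renameFrac_algebraMap]

theorem renameFrac_X (w : Equiv.Perm (Fin n)) (j : Fin n) :
    renameFrac w (ι (X j)) = ι (X (w j)) := by
  rw [renameFrac_algebraMap, rename_X]

theorem renameFrac_C (w : Equiv.Perm (Fin n)) (c : F) :
    renameFrac w (ι (C c)) = ι (C c) := by
  rw [renameFrac_algebraMap, rename_C]

theorem renameFrac_transp_transp (i : ℕ) (h : i + 1 < n) (x : K n) :
    renameFrac (transp n i h) (renameFrac (transp n i h) x) = x := by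
  rw [renameFrac_renameFrac, transp_mul_self, renameFrac_one]

theorem algebraMap_X_ne {a b : ℕ} (ha : a < n) (hb : b < n) (hab : a ≠ b) :
    ι (X ⟨a, ha⟩) ≠ ι (X ⟨b, hb⟩) :=
  (IsFractionRing.injective (Pn n) (K n)).ne ((X_injective (R := F)).ne (by simpa using hab))

theorem algebraMap_X_sub_X_ne_zero (i : ℕ) (h : i + 1 < n) :
    ι (X ⟨i, by omega⟩) - ι (X ⟨i + 1, h⟩) ≠ 0 :=
  sub_ne_zero.mpr (algebraMap_X_ne _ _ (by omega))

theorem algebraMap_dd (hdd : IsDD dd) (i : ℕ) (h : i + 1 < n) (f : Pn n) :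
    ι (dd i h f) = (ι f - renameFrac (transp n i h) (ι f))
      / (ι (X ⟨i, by omega⟩) - ι (X ⟨i + 1, h⟩)) := by
  rw [eq_div_iff (algebraMap_X_sub_X_ne_zero i h), renameFrac_algebraMap, ← map_sub, ← map_sub,
    ← hdd i h f, map_mul, mul_comm]

theorem algebraMap_Bop (hdd : IsDD dd) (i : ℕ) (h : i + 1 < n) (f : Pn n) :
    ι (Bop dd i h f) = demazureLusztig (renameFrac (transp n i h)) (ι (C q))
      (ι (X ⟨i, by omega⟩)) (ι (X ⟨i + 1, h⟩)) (ι f) := by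
  have hne := algebraMap_X_sub_X_ne_zero i h
  simp only [Bop, Xop, LinearMap.neg_apply, LinearMap.sub_apply, LinearMap.comp_apply,
    LinearMap.smul_apply, LinearMap.mulLeft_apply, smul_eq_C_mul, map_neg, map_sub, map_mul,
    algebraMap_dd hdd, renameFrac_X, transp_apply_right, demazureLusztig]
  field_simp
  ring

theorem Bop_comp_self (hdd : IsDD dd) (i : ℕ) (h : i + 1 < n) :
    Bop dd i h ∘ₗ Bop dd i h = (1 - q) • Bop dd i h + q • LinearMap.id := by
  refine LinearMap.ext fun f => IsFractionRing.injective (Pn n) (K n) ?_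
  simp only [LinearMap.comp_apply, LinearMap.add_apply, LinearMap.smul_apply,
    LinearMap.id_apply, smul_eq_C_mul, map_add, map_mul, map_sub, map_one, algebraMap_Bop hdd]
  exact demazureLusztig_sq (renameFrac_transp_transp i h)
    (by rw [renameFrac_X, transp_apply_left]) (renameFrac_C _ _)
    (algebraMap_X_ne _ _ (by omega)) _

theorem Bop_comm (hdd : IsDD dd) (i j : ℕ) (hi : i + 1 < n) (hj : j + 1 < n)
    (hij : i + 1 < j ∨ j + 1 < i) :
    Bop dd i hi ∘ₗ Bop dd j hj = Bop dd j hj ∘ₗ Bop dd i hi := by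
  refine LinearMap.ext fun f => IsFractionRing.injective (Pn n) (K n) ?_
  simp only [LinearMap.comp_apply, algebraMap_Bop hdd]
  exact demazureLusztig_comm
    (fun x => by rw [renameFrac_renameFrac, renameFrac_renameFrac, transp_commute i j hi hj hij])
    (by rw [renameFrac_X, transp_apply_of_ne _ _ _ (by omega) (by omega)])
    (by rw [renameFrac_X, transp_apply_of_ne _ _ _ (by omega) (by omega)])
    (by rw [renameFrac_X, transp_apply_of_ne _ _ _ (by omega) (by omega)])
    (by rw [renameFrac_X, transp_apply_of_ne _ _ _ (by omega) (by omega)])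
    (renameFrac_C _ _) (renameFrac_C _ _) _

theorem Bop_braid (hdd : IsDD dd) (i : ℕ) (h : i + 2 < n) :
    Bop dd i (by omega) ∘ₗ (Bop dd (i + 1) h ∘ₗ Bop dd i (by omega))
      = Bop dd (i + 1) h ∘ₗ (Bop dd i (by omega) ∘ₗ Bop dd (i + 1) h) := by
  refine LinearMap.ext fun f => IsFractionRing.injective (Pn n) (K n) ?_
  simp only [LinearMap.comp_apply, algebraMap_Bop hdd]
  exact demazureLusztig_braid (renameFrac_transp_transp _ _) (renameFrac_transp_transp _ _)
    (fun x => by simp only [renameFrac_renameFrac, ← mul_assoc, transp_braid i h])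
    (by rw [renameFrac_X, transp_apply_left])
    (by rw [renameFrac_X, transp_apply_of_ne _ _ _ (by omega) (by omega)])
    (by rw [renameFrac_X, transp_apply_left])
    (by rw [renameFrac_X, transp_apply_of_ne _ _ _ (by omega) (by omega)])
    (renameFrac_C _ _) (renameFrac_C _ _)
    (algebraMap_X_ne _ _ (by omega)) (algebraMap_X_ne _ _ (by omega))
    (algebraMap_X_ne _ _ (by omega)) _

end FractionField

theorem stmt17_general (n : ℕ) (dd : DDFam n) (hdd : IsDD dd) :
    HeckeRels (fun i h => Bop dd i h) :=
  ⟨Bop_braid hdd, Bop_comm hdd, Bop_comp_self hdd⟩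

/-- the operators `B_i = -(∂_i ∘ X_{i+1} - q X_{i+1} ∘ ∂_i)` satisfy
the Hecke algebra relations. -/
theorem stmt17 (n : ℕ) (hn : 2 ≤ n) (dd : DDFam n) (hdd : IsDD dd) :
    HeckeRels (fun i h => Bop dd i h) :=
  stmt17_general n dd hdd
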